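/- Let q ∈ (0,1) and let 0 ≤ D ≤ min{q, 1−q}/2. Consider the binary channel with multiplicative Bernoulli state: S ~ Bernoulli(q), X ∈ {0,1} with pmf P_X independent of S, Y = S·X, perfect feedback Z = Y, and Hamming distortion. Then the information-theoretic capacity-distortion tradeoff, defined as C_inf(D) := max over pmfs P_X on {0,1} satisfying min_{h:{0,1}²→{0,1}} E[S ⊕ h(X,Y)] ≤ D of I(X; Y | S), equals q · H_b( D / min{q, 1−q} ). -/
import Mathlib


open Finset

/-- The binary entropy function `H_b(p) = −p log₂ p − (1−p) log₂ (1−p)`. -/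
noncomputable def binEnt (p : ℝ) : ℝ :=
  -(p * Real.logb 2 p) - (1 - p) * Real.logb 2 (1 - p)

lemma binEnt_eq (p : ℝ) : binEnt p = Real.binEntropy p / Real.log 2 := by
  unfold binEnt Real.binEntropy
  simp only [Real.logb, Real.log_inv]
  ring

lemma binEnt_mono {a b : ℝ} (ha : 0 ≤ a) (hab : a ≤ b) (hb : b ≤ 1/2) :
    binEnt a ≤ binEnt b := by
  rw [binEnt_eq, binEnt_eq]
  have h2 : (0:ℝ) < Real.log 2 := Real.log_pos (by norm_num)
  have := Real.binEntropy_strictMonoOn.monotoneOn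
    (a := a) (b := b) ⟨ha, by norm_num; linarith⟩ ⟨by linarith, by norm_num; linarith⟩ hab
  exact div_le_div_of_nonneg_right this h2.le

lemma triple_sum_eq (q : ℝ) (PX : Fin 2 → ℝ) (h1 : PX 0 + PX 1 = 1) :
    (∑ s : Fin 2, ∑ x : Fin 2, ∑ y : Fin 2,
      (if s = 1 then q else 1 - q) * PX x *
        (if y = s * x then (1:ℝ) else 0) *
        Real.logb 2 ((if y = s * x then (1:ℝ) else 0) /
          (∑ x' : Fin 2, PX x' * (if y = s * x' then (1:ℝ) else 0))))
    = q * binEnt (PX 0) := by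
  simp [Fin.sum_univ_two, binEnt]
  rw [h1, Real.logb_one]
  have h2 : PX 1 = 1 - PX 0 := by linarith
  rw [h2]; ring

lemma iInf_lb (q : ℝ) (hq0 : 0 ≤ q) (hq1 : q ≤ 1) (PX : Fin 2 → ℝ) (hpos : ∀ x, 0 ≤ PX x) :
    PX 0 * min q (1-q) ≤ ⨅ h : Fin 2 → Fin 2 → Fin 2, ∑ s : Fin 2, ∑ x : Fin 2,
      (if s = 1 then q else 1 - q) * PX x * (if h x (s * x) = s then (0:ℝ) else 1) := by
  apply le_ciInf
  intro h
  have h0 := hpos 0; have h1 := hpos 1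
  simp only [Fin.sum_univ_two]
  norm_num
  have hc : h 0 0 = 0 ∨ h 0 0 = 1 := by omega
  have hm : min q (1-q) ≤ q ∧ min q (1-q) ≤ 1-q := ⟨min_le_left _ _, min_le_right _ _⟩
  rcases hc with hc | hc <;> simp [hc] <;>
    rcases em (h 1 0 = 0) with h10 | h10 <;> rcases em (h 1 1 = 1) with h11 | h11 <;>
      simp [h10, h11] <;> nlinarith [hm.1, hm.2, mul_nonneg hq0 h0, mul_nonneg hq0 h1, mul_nonneg (by linarith : (0:ℝ) ≤ 1 - q) h0, mul_nonneg (by linarith : (0:ℝ) ≤ 1 - q) h1]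

/-- **Corollary 2 (capacity-distortion tradeoff of the binary channel with
multiplicative Bernoulli state):** for `0 ≤ D ≤ min{q,1−q}/2`, the maximum of
`I(X;Y|S)` over input pmfs whose optimal-estimator Hamming distortion is at
most `D` equals `q · H_b(D / min{q, 1−q})`. -/
theorem stmt_12 (q : ℝ) (hq0 : 0 < q) (hq1 : q < 1) (D : ℝ)
    (hD0 : 0 ≤ D) (hD : D ≤ min q (1 - q) / 2) :
    sSup { r : ℝ | ∃ PX : Fin 2 → ℝ, (∀ x, 0 ≤ PX x) ∧ (∑ x, PX x = 1) ∧
      (⨅ h : Fin 2 → Fin 2 → Fin 2,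
          ∑ s : Fin 2, ∑ x : Fin 2,
            (if s = 1 then q else 1 - q) * PX x *
              (if h x (s * x) = s then (0:ℝ) else 1)) ≤ D ∧
      r = ∑ s : Fin 2, ∑ x : Fin 2, ∑ y : Fin 2,
            (if s = 1 then q else 1 - q) * PX x *
              (if y = s * x then (1:ℝ) else 0) *
              Real.logb 2 ((if y = s * x then (1:ℝ) else 0) /
                (∑ x' : Fin 2, PX x' * (if y = s * x' then (1:ℝ) else 0))) }
      = q * binEnt (D / min q (1 - q)) := by
  set m := min q (1 - q) with hmdef
  have hm0 : 0 < m := lt_min hq0 (by linarith)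
  have hp0 : 0 ≤ D / m := div_nonneg hD0 hm0.le
  have hp2 : D / m ≤ 1 / 2 := by
    rw [div_le_div_iff₀ hm0 (by norm_num)]; linarith
  -- the witness pmf
  set PX : Fin 2 → ℝ := ![D / m, 1 - D / m] with hPXdef
  have hPX0 : PX 0 = D / m := rfl
  have hPX1 : PX 1 = 1 - D / m := rfl
  have hmem : q * binEnt (D / m) ∈ { r : ℝ | ∃ PX : Fin 2 → ℝ, (∀ x, 0 ≤ PX x) ∧ (∑ x, PX x = 1) ∧
      (⨅ h : Fin 2 → Fin 2 → Fin 2,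
          ∑ s : Fin 2, ∑ x : Fin 2,
            (if s = 1 then q else 1 - q) * PX x *
              (if h x (s * x) = s then (0:ℝ) else 1)) ≤ D ∧
      r = ∑ s : Fin 2, ∑ x : Fin 2, ∑ y : Fin 2,
            (if s = 1 then q else 1 - q) * PX x *
              (if y = s * x then (1:ℝ) else 0) *
              Real.logb 2 ((if y = s * x then (1:ℝ) else 0) /
                (∑ x' : Fin 2, PX x' * (if y = s * x' then (1:ℝ) else 0))) } := by
    refine ⟨PX, ?_, ?_, ?_, ?_⟩
    · intro x
      fin_cases x
      · show (0:ℝ) ≤ D / m; exact hp0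
      · show (0:ℝ) ≤ 1 - D / m; linarith
    · rw [Fin.sum_univ_two, hPX0, hPX1]; ring
    · -- infimum ≤ D : evaluate at a good estimator
      set h₀ : Fin 2 → Fin 2 → Fin 2 :=
        fun x y => if x = 1 then y else (if q ≤ 1 - q then 0 else 1) with hh₀
      refine le_trans (ciInf_le (Set.Finite.bddBelow (Set.finite_range _)) h₀) ?_
      rcases le_or_gt q (1 - q) with hle | hlt
      · have hmq : m = q := min_eq_left hle
        simp only [Fin.sum_univ_two, hh₀, hle, if_true]
        norm_num [hPX0, hPX1]
        have hq' : q * (D / q) = D := by field_simp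
        rw [hmq]; linarith
      · have hmq : m = 1 - q := min_eq_right hlt.le
        simp only [Fin.sum_univ_two, hh₀, not_le.mpr hlt, if_false]
        norm_num [hPX0, hPX1]
        have hq' : (1 - q) * (D / (1 - q)) = D := by
          rw [mul_div_assoc']
          exact mul_div_cancel_left₀ D (by linarith : (1:ℝ) - q ≠ 0)
        rw [hmq]; linarith
    · rw [triple_sum_eq q PX (by rw [hPX0, hPX1]; ring), hPX0]
  have hub : ∀ r ∈ { r : ℝ | ∃ PX : Fin 2 → ℝ, (∀ x, 0 ≤ PX x) ∧ (∑ x, PX x = 1) ∧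
      (⨅ h : Fin 2 → Fin 2 → Fin 2,
          ∑ s : Fin 2, ∑ x : Fin 2,
            (if s = 1 then q else 1 - q) * PX x *
              (if h x (s * x) = s then (0:ℝ) else 1)) ≤ D ∧
      r = ∑ s : Fin 2, ∑ x : Fin 2, ∑ y : Fin 2,
            (if s = 1 then q else 1 - q) * PX x *
              (if y = s * x then (1:ℝ) else 0) *
              Real.logb 2 ((if y = s * x then (1:ℝ) else 0) /
                (∑ x' : Fin 2, PX x' * (if y = s * x' then (1:ℝ) else 0))) },
      r ≤ q * binEnt (D / m) := by
    rintro r ⟨Q, hQpos, hQsum, hQinf, hr⟩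
    have hQ01 : Q 0 + Q 1 = 1 := by rw [← Fin.sum_univ_two]; exact hQsum
    have hlow := iInf_lb q hq0.le hq1.le Q hQpos
    have hQ0 : Q 0 * m ≤ D := le_trans hlow hQinf
    have hQle : Q 0 ≤ D / m := (le_div_iff₀ hm0).mpr hQ0
    rw [hr, triple_sum_eq q Q hQ01]
    have := binEnt_mono (hQpos 0) hQle hp2
    nlinarith
  exact le_antisymm (csSup_le ⟨_, hmem⟩ hub) (le_csSup ⟨_, hub⟩ hmem)
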